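/- For any real symmetric n×n matrices A₁, A₂ (any n ≥ 1), the set {(xᵀA₁x, xᵀA₂x) : x ∈ ℝⁿ} is a convex cone in ℝ². -/

import Mathlib

/-!
Fix `x, y` and `m = Q(x) + Q(y)`, where `Q = (Q₁, Q₂)`. For `z = (1 - t) • x + t • y` and
`w = -t • x + (1 - t) • y` the cross terms cancel, so `Q(z) + Q(w) = ((1 - t)² + t²) • m`.
The cross product of `Q(z)` with `m` is a quadratic form in `z` taking opposite values at `x`
and `y`, so by the intermediate value theorem some `t` makes `Q(z)`, hence also `Q(w)`,
a multiple of `m`. The two multipliers add up to a positive number, so one of them is positive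
and rescaling `z` or `w` gives a preimage of `m`. The joint range is therefore closed under
addition, and, being closed under nonnegative scaling, it is a convex cone.
-/

open Matrix Set

theorem exists_eq_smul_of_mul_sub_mul_eq_zero {v m : ℝ × ℝ} (hm : m ≠ 0)
    (h : m.2 * v.1 - m.1 * v.2 = 0) : ∃ r : ℝ, v = r • m := by
  rcases eq_or_ne m.1 0 with h1 | h1
  · have h2 : m.2 ≠ 0 := fun h2 => hm (Prod.ext h1 h2)
    refine ⟨v.2 / m.2, Prod.ext ?_ ?_⟩
    · simpa [h1, h2] using h
    · simp [h2]
  · refine ⟨v.1 / m.1, Prod.ext ?_ ?_⟩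
    · simp [h1]
    · simp only [Prod.smul_snd, smul_eq_mul]
      field_simp
      linear_combination -h

namespace QuadraticMap

section CommRing

variable {R M N : Type*} [CommRing R] [AddCommGroup M] [AddCommGroup N] [Module R M]
  [Module R N]

def jointRange (Q₁ Q₂ : QuadraticMap R M N) : Set (N × N) :=
  range fun x => (Q₁ x, Q₂ x)

theorem map_smul_add_smul (Q : QuadraticMap R M N) (a b : R) (x y : M) :
    Q (a • x + b • y) = (a * a) • Q x + (a * b) • polar Q x y + (b * b) • Q y := by
  rw [QuadraticMap.map_add Q, QuadraticMap.map_smul, QuadraticMap.map_smul, polar_smul_left,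
    polar_smul_right, smul_smul]
  module

theorem map_rotate_add_map_rotate (Q : QuadraticMap R M N) (c s : R) (x y : M) :
    Q (c • x + s • y) + Q ((-s) • x + c • y) = (c * c + s * s) • (Q x + Q y) := by
  rw [map_smul_add_smul, map_smul_add_smul]
  module

end CommRing

variable {V : Type*} [AddCommGroup V] [Module ℝ V]

theorem exists_map_smul_add_smul_eq_zero_of_mul_nonpos {q : QuadraticForm ℝ V} {x y : V}
    (h : q x * q y ≤ 0) : ∃ t : ℝ, q ((1 - t) • x + t • y) = 0 := by
  have hcont : Continuous fun t : ℝ => q ((1 - t) • x + t • y) := by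
    simp only [map_smul_add_smul, smul_eq_mul]
    fun_prop
  have hzero : (0 : ℝ) ∈ uIcc (q x) (q y) := by
    rcases mul_nonpos_iff.mp h with ⟨hx, hy⟩ | ⟨hx, hy⟩
    exacts [mem_uIcc_of_ge hy hx, mem_uIcc_of_le hx hy]
  obtain ⟨t, -, ht⟩ := intermediate_value_uIcc (a := (0 : ℝ)) (b := 1) hcont.continuousOn
    (by simpa using hzero)
  exact ⟨t, ht⟩

variable (Q₁ Q₂ : QuadraticForm ℝ V)

theorem smul_mem_jointRange {c : ℝ} (hc : 0 ≤ c) (x : V) :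
    c • (Q₁ x, Q₂ x) ∈ jointRange Q₁ Q₂ :=
  ⟨√c • x, by simp [QuadraticMap.map_smul, Real.mul_self_sqrt hc]⟩

theorem add_mem_jointRange (x y : V) :
    (Q₁ x, Q₂ x) + (Q₁ y, Q₂ y) ∈ jointRange Q₁ Q₂ := by
  set m := (Q₁ x, Q₂ x) + (Q₁ y, Q₂ y)
  rcases eq_or_ne m 0 with hm | hm
  · exact ⟨0, by simp [hm]⟩
  have of_eq_smul : ∀ (z : V) (r : ℝ), 0 < r → (Q₁ z, Q₂ z) = r • m →
      m ∈ jointRange Q₁ Q₂ := by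
    intro z r hr hz
    have := smul_mem_jointRange Q₁ Q₂ (inv_nonneg.2 hr.le) z
    rwa [hz, smul_smul, inv_mul_cancel₀ hr.ne', one_smul] at this
  set q := m.2 • Q₁ - m.1 • Q₂
  have hq : ∀ z, q z = m.2 * Q₁ z - m.1 * Q₂ z := fun z => rfl
  have hqy : q y = -q x := by
    simp only [hq, m, Prod.fst_add, Prod.snd_add]
    ring
  obtain ⟨t, ht⟩ := exists_map_smul_add_smul_eq_zero_of_mul_nonpos (q := q) (x := x) (y := y)
    (by rw [hqy]; nlinarith [sq_nonneg (q x)])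
  obtain ⟨r, hr⟩ := exists_eq_smul_of_mul_sub_mul_eq_zero hm (v := (Q₁ _, Q₂ _))
    (by rw [← hq]; exact ht)
  have hw : (Q₁ ((-t) • x + (1 - t) • y), Q₂ ((-t) • x + (1 - t) • y)) =
      ((1 - t) * (1 - t) + t * t - r) • m := by
    have h₁ := map_rotate_add_map_rotate Q₁ (1 - t) t x y
    have h₂ := map_rotate_add_map_rotate Q₂ (1 - t) t x y
    simp only [m, Prod.ext_iff, Prod.smul_fst, Prod.smul_snd, Prod.fst_add, Prod.snd_add,
      smul_eq_mul] at hr ⊢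
    constructor
    · linear_combination h₁ - hr.1
    · linear_combination h₂ - hr.2
  rcases lt_or_ge 0 r with hr0 | hr0
  · exact of_eq_smul _ r hr0 hr
  · exact of_eq_smul _ _ (by nlinarith) hw

theorem convex_jointRange : Convex ℝ (jointRange Q₁ Q₂) := by
  rintro _ ⟨x, rfl⟩ _ ⟨y, rfl⟩ a b ha hb -
  obtain ⟨x', hx'⟩ := smul_mem_jointRange Q₁ Q₂ ha x
  obtain ⟨y', hy'⟩ := smul_mem_jointRange Q₁ Q₂ hb y
  rw [← hx', ← hy']
  exact add_mem_jointRange Q₁ Q₂ x' y'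

end QuadraticMap

theorem dines (n : ℕ) (A₁ A₂ : Matrix (Fin n) (Fin n) ℝ) :
    Convex ℝ {y : ℝ × ℝ | ∃ x : Fin n → ℝ, y = (x ⬝ᵥ A₁ *ᵥ x, x ⬝ᵥ A₂ *ᵥ x)} ∧
    ∀ y ∈ {y : ℝ × ℝ | ∃ x : Fin n → ℝ, y = (x ⬝ᵥ A₁ *ᵥ x, x ⬝ᵥ A₂ *ᵥ x)},
      ∀ c : ℝ, 0 ≤ c →
        c • y ∈ {y : ℝ × ℝ | ∃ x : Fin n → ℝ, y = (x ⬝ᵥ A₁ *ᵥ x, x ⬝ᵥ A₂ *ᵥ x)} := by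
  have hS : {y : ℝ × ℝ | ∃ x : Fin n → ℝ, y = (x ⬝ᵥ A₁ *ᵥ x, x ⬝ᵥ A₂ *ᵥ x)} =
      QuadraticMap.jointRange A₁.toQuadraticForm' A₂.toQuadraticForm' := by
    ext y
    simp [QuadraticMap.jointRange, Matrix.toQuadraticForm', Matrix.toLinearMap₂'_apply',
      eq_comm]
  rw [hS]
  refine ⟨QuadraticMap.convex_jointRange _ _, ?_⟩
  rintro _ ⟨x, rfl⟩ c hc
  exact QuadraticMap.smul_mem_jointRange _ _ hc x
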